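/- Membership recovery perturbation bound. Let Π ∈ ℝ^{p×r} be a membership matrix (nonnegative entries, each row summing to 1), let B ∈ ℝ^{r×r} be invertible, and set U := Π·B. Let Û ∈ ℝ^{p×r}, W ∈ O(r), let 𝒫 ∈ ℝ^{r×r} be a permutation matrix, and let B̂ ∈ ℝ^{r×r} be invertible. If ‖Û − U·W‖_{2,∞} ≤ ε and ‖B̂ − 𝒫ᵀ·B·W‖_{2,∞} ≤ δ, then ‖Û·B̂^{-1} − Π·𝒫‖_{2,∞} ≤ (ε + δ)·‖B̂^{-1}‖. -/

import Mathlib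

open Matrix
open scoped BigOperators Kronecker

noncomputable section

/-- Euclidean norm of a finitely-indexed real vector. -/
def enorm2 {n : Type*} [Fintype n] (v : n → ℝ) : ℝ := Real.sqrt (∑ i, (v i) ^ 2)

/-- `‖M‖_{2,∞}`: largest Euclidean norm of a row of `M`. -/
def twoInf {m n : Type*} [Fintype m] [Fintype n] (M : Matrix m n ℝ) : ℝ :=
  sSup {c | ∃ i, c = enorm2 (M i)}

/-- Spectral norm of a matrix. -/
def spec {m n : Type*} [Fintype m] [Fintype n] (M : Matrix m n ℝ) : ℝ :=
  sSup {c | ∃ v : n → ℝ, enorm2 v ≤ 1 ∧ c = enorm2 (M.mulVec v)}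

/-- A membership matrix: nonnegative entries, rows summing to one. -/
def IsMembership {p r : ℕ} (P : Matrix (Fin p) (Fin r) ℝ) : Prop :=
  (∀ i l, 0 ≤ P i l) ∧ ∀ i, ∑ l, P i l = 1

/-- A permutation matrix. -/
def IsPermMatrix {r : ℕ} (P : Matrix (Fin r) (Fin r) ℝ) : Prop :=
  ∃ e : Equiv.Perm (Fin r), ∀ i j, P i j = if j = e i then 1 else 0

/-! With `E := Û - Π B W` and `F := B̂ - 𝒫ᵀ B W` one has `Û B̂⁻¹ - Π 𝒫 = (E - Π 𝒫 F) B̂⁻¹`,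
since `Π 𝒫 𝒫ᵀ B W = Π B W`. The rows of `Π 𝒫` are again convex weights, so every row of `Π 𝒫 F`
is a convex combination of rows of `F` and `‖E - Π 𝒫 F‖_{2,∞} ≤ ε + δ`; finally, right
multiplication by `B̂⁻¹` scales the norm of each row by at most `‖B̂⁻¹‖`. -/

open scoped Matrix.Norms.L2Operator

section Norms

variable {l m n : Type*} [Fintype l] [Fintype m] [Fintype n]

lemma enorm2_eq_norm (v : n → ℝ) : enorm2 v = ‖WithLp.toLp 2 v‖ := by
  simp [enorm2, EuclideanSpace.norm_eq]

lemma enorm2_sub_le (u v : n → ℝ) : enorm2 (u - v) ≤ enorm2 u + enorm2 v := by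
  simpa only [enorm2_eq_norm, WithLp.toLp_sub] using norm_sub_le (WithLp.toLp 2 u) (WithLp.toLp 2 v)

lemma enorm2_sum_smul_le {ι : Type*} [Fintype ι] (w : ι → ℝ) (hw : ∀ k, 0 ≤ w k)
    (v : ι → n → ℝ) : enorm2 (∑ k, w k • v k) ≤ ∑ k, w k * enorm2 (v k) := by
  simp only [enorm2_eq_norm, WithLp.toLp_sum, WithLp.toLp_smul]
  refine (norm_sum_le _ _).trans_eq (Finset.sum_congr rfl fun k _ => ?_)
  rw [norm_smul, Real.norm_of_nonneg (hw k)]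

lemma spec_eq_l2_opNorm [DecidableEq n] (M : Matrix m n ℝ) : spec M = ‖M‖ := by
  rw [Matrix.l2_opNorm_def, ← ContinuousLinearMap.sSup_unitClosedBall_eq_norm, spec]
  congr 1
  ext c
  simp only [Set.mem_ofPred_eq, Set.mem_image, Metric.mem_closedBall, dist_zero_right,
    enorm2_eq_norm]
  constructor
  · rintro ⟨v, hv, rfl⟩
    exact ⟨WithLp.toLp 2 v, hv, rfl⟩
  · rintro ⟨x, hx, rfl⟩
    exact ⟨x.ofLp, hx, rfl⟩

lemma spec_nonneg (M : Matrix m n ℝ) : 0 ≤ spec M := by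
  classical
  exact spec_eq_l2_opNorm M ▸ norm_nonneg _

lemma enorm2_vecMul_le (v : m → ℝ) (M : Matrix m n ℝ) : enorm2 (v ᵥ* M) ≤ enorm2 v * spec M := by
  classical
  rw [← Matrix.mulVec_transpose, spec_eq_l2_opNorm, enorm2_eq_norm, enorm2_eq_norm, mul_comm,
    ← Matrix.l2_opNorm_conjTranspose, Matrix.conjTranspose_eq_transpose_of_trivial]
  exact Matrix.l2_opNorm_mulVec Mᵀ (WithLp.toLp 2 v)

lemma twoInf_eq_iSup (M : Matrix m n ℝ) : twoInf M = ⨆ i, enorm2 (M i) := by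
  simp only [twoInf, iSup, Set.range, eq_comm]

lemma enorm2_row_le_twoInf (M : Matrix m n ℝ) (i : m) : enorm2 (M i) ≤ twoInf M := by
  rw [twoInf_eq_iSup]
  exact le_ciSup (f := fun i => enorm2 (M i)) (Set.finite_range _).bddAbove i

lemma twoInf_le {M : Matrix m n ℝ} {c : ℝ} (h : ∀ i, enorm2 (M i) ≤ c) (hc : 0 ≤ c) :
    twoInf M ≤ c :=
  twoInf_eq_iSup M ▸ Real.iSup_le h hc

lemma twoInf_nonneg (M : Matrix m n ℝ) : 0 ≤ twoInf M :=
  twoInf_eq_iSup M ▸ Real.iSup_nonneg fun i => by rw [enorm2_eq_norm]; exact norm_nonneg _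

lemma twoInf_sub_le (A B : Matrix m n ℝ) : twoInf (A - B) ≤ twoInf A + twoInf B :=
  twoInf_le (fun i => (enorm2_sub_le (A i) (B i)).trans
      (add_le_add (enorm2_row_le_twoInf A i) (enorm2_row_le_twoInf B i)))
    (add_nonneg (twoInf_nonneg A) (twoInf_nonneg B))

lemma twoInf_mul_le (A : Matrix l m ℝ) (M : Matrix m n ℝ) : twoInf (A * M) ≤ twoInf A * spec M := by
  refine twoInf_le (fun i => ?_) (mul_nonneg (twoInf_nonneg A) (spec_nonneg M))
  calc enorm2 ((A * M) i) = enorm2 (A i ᵥ* M) := rfl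
    _ ≤ enorm2 (A i) * spec M := enorm2_vecMul_le (A i) M
    _ ≤ twoInf A * spec M := mul_le_mul_of_nonneg_right (enorm2_row_le_twoInf A i) (spec_nonneg M)

lemma IsMembership.twoInf_mul_le {p r : ℕ} {Q : Matrix (Fin p) (Fin r) ℝ} (hQ : IsMembership Q)
    (E : Matrix (Fin r) n ℝ) : twoInf (Q * E) ≤ twoInf E := by
  refine twoInf_le (fun i => ?_) (twoInf_nonneg E)
  calc enorm2 ((Q * E) i) = enorm2 (∑ k, Q i k • E k) := by rw [← Matrix.vecMul_eq_sum]; rfl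
    _ ≤ ∑ k, Q i k * enorm2 (E k) := enorm2_sum_smul_le _ (hQ.1 i) E
    _ ≤ ∑ k, Q i k * twoInf E := by
      gcongr with k
      exacts [hQ.1 i k, enorm2_row_le_twoInf E k]
    _ = twoInf E := by rw [← Finset.sum_mul, hQ.2 i, one_mul]

end Norms

lemma IsPermMatrix.exists_eq_permMatrix {r : ℕ} {P : Matrix (Fin r) (Fin r) ℝ}
    (hP : IsPermMatrix P) : ∃ σ : Equiv.Perm (Fin r), P = σ.permMatrix ℝ := by
  obtain ⟨σ, hσ⟩ := hP
  exact ⟨σ, Matrix.ext fun i j => by simp [hσ, eq_comm]⟩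

lemma permMatrix_mul_transpose {R n : Type*} [NonAssocSemiring R] [Fintype n] [DecidableEq n]
    (σ : Equiv.Perm n) : σ.permMatrix R * (σ.permMatrix R)ᵀ = 1 := by
  rw [Matrix.transpose_permMatrix, ← Matrix.permMatrix_mul, inv_mul_cancel, Matrix.permMatrix_one]

lemma IsMembership.mul_permMatrix {p r : ℕ} {Q : Matrix (Fin p) (Fin r) ℝ} (hQ : IsMembership Q)
    (σ : Equiv.Perm (Fin r)) : IsMembership (Q * σ.permMatrix ℝ) := by
  rw [PEquiv.mul_toMatrix_toPEquiv]
  exact ⟨fun i l => hQ.1 i _, fun i => (Equiv.sum_comp σ.symm (Q i)).trans (hQ.2 i)⟩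

lemma mul_inv_sub_mul_eq {R p n : Type*} [CommRing R] [Fintype n] [DecidableEq n]
    (U A : Matrix p n R) (B W Q Q' Bh : Matrix n n R) (hQ : Q * Q' = 1) (hBh : IsUnit Bh.det) :
    U * Bh⁻¹ - A * Q = (U - A * B * W - A * Q * (Bh - Q' * B * W)) * Bh⁻¹ := by
  have hA : A * Q * (Q' * B * W) = A * B * W := by
    simp only [Matrix.mul_assoc, ← Matrix.mul_assoc Q Q', hQ, Matrix.one_mul]
  rw [Matrix.mul_sub, hA]
  simp only [Matrix.sub_mul]
  rw [Matrix.mul_assoc (A * Q) Bh, Matrix.mul_nonsing_inv _ hBh, Matrix.mul_one]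
  abel

theorem stmt18_general {p r : ℕ} (Pi : Matrix (Fin p) (Fin r) ℝ) (hPi : IsMembership Pi)
    (B : Matrix (Fin r) (Fin r) ℝ)
    (Uh : Matrix (Fin p) (Fin r) ℝ)
    (W : Matrix (Fin r) (Fin r) ℝ)
    (P : Matrix (Fin r) (Fin r) ℝ) (hP : IsPermMatrix P)
    (Bh : Matrix (Fin r) (Fin r) ℝ) (hBh : IsUnit Bh.det)
    (ε δ : ℝ)
    (h1 : twoInf (Uh - (Pi * B) * W) ≤ ε)
    (h2 : twoInf (Bh - Pᵀ * B * W) ≤ δ) :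
    twoInf (Uh * Bh⁻¹ - Pi * P) ≤ (ε + δ) * spec Bh⁻¹ := by
  obtain ⟨σ, rfl⟩ := hP.exists_eq_permMatrix
  rw [mul_inv_sub_mul_eq Uh Pi B W _ _ Bh (permMatrix_mul_transpose σ) hBh]
  have hrows : twoInf (Uh - Pi * B * W - Pi * σ.permMatrix ℝ * (Bh - (σ.permMatrix ℝ)ᵀ * B * W))
      ≤ ε + δ :=
    (twoInf_sub_le _ _).trans <| add_le_add h1 <|
      ((hPi.mul_permMatrix σ).twoInf_mul_le _).trans h2
  exact (twoInf_mul_le _ _).trans (mul_le_mul_of_nonneg_right hrows (spec_nonneg _))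

/-- membership recovery perturbation bound. -/
theorem stmt18 {p r : ℕ} (Pi : Matrix (Fin p) (Fin r) ℝ) (hPi : IsMembership Pi)
    (B : Matrix (Fin r) (Fin r) ℝ) (hB : IsUnit B.det)
    (Uh : Matrix (Fin p) (Fin r) ℝ)
    (W : Matrix (Fin r) (Fin r) ℝ) (hW : Wᵀ * W = 1)
    (P : Matrix (Fin r) (Fin r) ℝ) (hP : IsPermMatrix P)
    (Bh : Matrix (Fin r) (Fin r) ℝ) (hBh : IsUnit Bh.det)
    (ε δ : ℝ)
    (h1 : twoInf (Uh - (Pi * B) * W) ≤ ε)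
    (h2 : twoInf (Bh - Pᵀ * B * W) ≤ δ) :
    twoInf (Uh * Bh⁻¹ - Pi * P) ≤ (ε + δ) * spec Bh⁻¹ :=
  stmt18_general Pi hPi B Uh W P hP Bh hBh ε δ h1 h2

end
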